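/- Coboundary identity for products of sequence cocycles: let L be a graded Lie algebra (degree-shifted polyvector fields), and let (pᵢ) and (qⱼ) be families of elements of L with the property that [pᵢ, qⱼ] = 0 and pᵢ · qⱼ-type interactions vanish as in the paper (e.g., pᵢ ∈ ℝ[xᵢ,ξᵢ], qⱼ ∈ ℝ[xⱼ,ξⱼ] involving disjoint variables), each family locally finite on any fixed argument. Then the Chevalley–Eilenberg 2-cochain c(γ,ν) = Σᵢⱼ ±[pᵢ,γ][qⱼ,ν] ± Σᵢⱼ ±[pᵢ,ν][qⱼ,γ] (with Koszul signs as in the paper) is the Chevalley coboundary of the 1-cochain b(γ) = Σ_{i≤j} pᵢ[qⱼ,γ] - Σ_{i>j} ± qⱼ[pᵢ,γ]. In the simplest finite case with a single p and single q in disjoint variables (so [p,q]=0 and p,q Poisson-commute with each other's variables), verify: the 2-cocycle c(γ,ν) = ±[p,γ][q,ν] ± [p,ν][q,γ] equals the coboundary of b(γ) = p[q,γ]. -/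

import Mathlib

/-!
Since `p` and `q` depend on disjoint pairs of coordinates, every term of `[p, q]` contains a
partial derivative of `p` or of `q` that vanishes. The coboundary identity holds for arbitrary
`p` and `q`: expanding `[ν, p[q, γ]]` and `[γ, p[q, ν]]` by the Leibniz rule, the terms that are
multiples of `p` cancel against `p[q, [γ, ν]]` by the Jacobi identity, and the remaining terms
are `[p, γ][q, ν] - [p, ν][q, γ]`.
-/

open MvPolynomial

/-- The (even model of the) space of polynomial polyvector fields on ℝⁿ:
polynomials in variables `x i = X (Sum.inl i)` and `ξ i = X (Sum.inr i)`. -/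
abbrev Tpoly (n : ℕ) : Type := MvPolynomial (Fin n ⊕ Fin n) ℝ

noncomputable def xVar {n : ℕ} (i : Fin n) : Tpoly n := X (Sum.inl i)
noncomputable def xiVar {n : ℕ} (i : Fin n) : Tpoly n := X (Sum.inr i)

/-- The Schouten bracket, determined by `[ξ i, x j] = δ i j` and the
biderivation (Leibniz) property. -/
noncomputable def schouten {n : ℕ} (p q : Tpoly n) : Tpoly n :=
  ∑ i : Fin n, (pderiv (Sum.inr i) p * pderiv (Sum.inl i) q
    - pderiv (Sum.inl i) p * pderiv (Sum.inr i) q)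

/-- Bi-homogeneity: homogeneous of degree `r₁` in the x's and `r₂` in the ξ's. -/
def BiHomog {n : ℕ} (p : Tpoly n) (r₁ r₂ : ℕ) : Prop :=
  p.IsWeightedHomogeneous (Sum.elim (fun _ => (1 : ℕ)) fun _ => 0) r₁ ∧
  p.IsWeightedHomogeneous (Sum.elim (fun _ => (0 : ℕ)) fun _ => 1) r₂

def coordSupport {n : ℕ} (p : Tpoly n) : Set (Fin n) :=
  {k | Sum.inl k ∈ p.vars ∨ Sum.inr k ∈ p.vars}

/-- Chevalley–Eilenberg coboundary of a 1-cochain `b` for the adjoint action, up to the overall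
sign `-1`. -/
noncomputable def ceCoboundary {n : ℕ} (b : Tpoly n → Tpoly n) (γ ν : Tpoly n) : Tpoly n :=
  b (schouten γ ν) + schouten ν (b γ) - schouten γ (b ν)

lemma pderiv_pderiv_comm {σ R : Type*} [CommSemiring R] (u v : σ) (f : MvPolynomial σ R) :
    pderiv u (pderiv v f) = pderiv v (pderiv u f) := by
  classical
  induction f using MvPolynomial.induction_on with
  | C a => simp
  | add p q hp hq => simp [hp, hq]
  | mul_X p m hp =>
    simp only [pderiv_mul, map_add, hp]
    rcases eq_or_ne m u with rfl | hu <;> rcases eq_or_ne m v with rfl | hv <;>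
      simp [*, mul_comm]

section Schouten

variable {n : ℕ}

lemma schouten_anticomm (a b : Tpoly n) : schouten a b = -schouten b a := by
  simp only [schouten, ← Finset.sum_neg_distrib]
  exact Finset.sum_congr rfl fun k _ => by ring

lemma schouten_add_right (a b c : Tpoly n) :
    schouten a (b + c) = schouten a b + schouten a c := by
  simp only [schouten, map_add, ← Finset.sum_add_distrib]
  exact Finset.sum_congr rfl fun k _ => by ring

lemma schouten_neg_right (a b : Tpoly n) : schouten a (-b) = -schouten a b := by
  simp only [schouten, map_neg, ← Finset.sum_neg_distrib]
  exact Finset.sum_congr rfl fun k _ => by ring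

lemma schouten_C_right (a : Tpoly n) (r : ℝ) : schouten a (C r) = 0 := by
  simp [schouten]

lemma schouten_zero_right (a : Tpoly n) : schouten a 0 = 0 := by
  simpa using schouten_C_right a 0

lemma schouten_mul_right (a b c : Tpoly n) :
    schouten a (b * c) = schouten a b * c + b * schouten a c := by
  simp only [schouten, pderiv_mul, Finset.sum_mul, Finset.mul_sum, ← Finset.sum_add_distrib]
  exact Finset.sum_congr rfl fun k _ => by ring

lemma schouten_X_inl (a : Tpoly n) (m : Fin n) :
    schouten a (X (Sum.inl m)) = pderiv (Sum.inr m) a := by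
  classical
  simp [schouten, pderiv_X, Pi.single_apply]

lemma schouten_X_inr (a : Tpoly n) (m : Fin n) :
    schouten a (X (Sum.inr m)) = -pderiv (Sum.inl m) a := by
  classical
  simp [schouten, pderiv_X, Pi.single_apply]

lemma pderiv_schouten (u : Fin n ⊕ Fin n) (a b : Tpoly n) :
    pderiv u (schouten a b) = schouten (pderiv u a) b + schouten a (pderiv u b) := by
  simp only [schouten, map_sum, map_sub, pderiv_mul, ← Finset.sum_add_distrib]
  refine Finset.sum_congr rfl fun k _ => ?_
  rw [pderiv_pderiv_comm u (Sum.inr k) a, pderiv_pderiv_comm u (Sum.inl k) a,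
    pderiv_pderiv_comm u (Sum.inr k) b, pderiv_pderiv_comm u (Sum.inl k) b]
  ring

/- Both sides are derivations in `c`, so it suffices to check the identity on the generators,
where brackets with `X m` are partial derivatives and it becomes `pderiv_schouten`. -/
lemma schouten_jacobi (a b c : Tpoly n) :
    schouten a (schouten b c) = schouten (schouten a b) c + schouten b (schouten a c) := by
  induction c using MvPolynomial.induction_on with
  | C r => simp [schouten_C_right, schouten_zero_right]
  | add c₁ c₂ h₁ h₂ =>
    simp only [schouten_add_right, h₁, h₂]
    ring
  | mul_X c m hc =>
    have jacobi_X : schouten a (schouten b (X m)) =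
        schouten (schouten a b) (X m) + schouten b (schouten a (X m)) := by
      rcases m with m | m
      · simp only [schouten_X_inl]
        rw [pderiv_schouten, schouten_anticomm b]
        ring
      · simp only [schouten_X_inr, schouten_neg_right]
        rw [pderiv_schouten, schouten_anticomm b]
        ring
    simp only [schouten_mul_right, schouten_add_right, hc, jacobi_X]
    ring

lemma schouten_eq_zero_of_disjoint {p q : Tpoly n}
    (h : Disjoint (coordSupport p) (coordSupport q)) : schouten p q = 0 := by
  refine Finset.sum_eq_zero fun k _ => ?_
  by_cases hk : k ∈ coordSupport p
  · have hq : k ∉ coordSupport q := h.notMem_of_mem_left hk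
    simp only [coordSupport, Set.mem_ofPred_eq, not_or] at hq
    simp [pderiv_eq_zero_of_notMem_vars hq.1, pderiv_eq_zero_of_notMem_vars hq.2]
  · simp only [coordSupport, Set.mem_ofPred_eq, not_or] at hk
    simp [pderiv_eq_zero_of_notMem_vars hk.1, pderiv_eq_zero_of_notMem_vars hk.2]

lemma coordSupport_subset_singleton {p : Tpoly n} {i : Fin n}
    (hp : (p.vars : Set (Fin n ⊕ Fin n)) ⊆ {Sum.inl i, Sum.inr i}) :
    coordSupport p ⊆ {i} := by
  rintro k (hk | hk) <;> simpa using hp hk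

lemma ceCoboundary_mul_schouten (p q γ ν : Tpoly n) :
    ceCoboundary (fun γ => p * schouten q γ) γ ν =
      schouten p γ * schouten q ν - schouten p ν * schouten q γ := by
  simp only [ceCoboundary, schouten_jacobi q γ ν, schouten_mul_right,
    schouten_anticomm ν p, schouten_anticomm γ p, schouten_anticomm (schouten q γ) ν]
  ring

end Schouten

/-- simplest finite case: for p, q in disjoint variables the
Schouten bracket [p,q] vanishes, and the Chevalley–Eilenberg 2-cocycle
`c(γ,ν) = [p,γ][q,ν] - [p,ν][q,γ]` is the coboundary of the 1-cochain
`b(γ) = p·[q,γ]`. -/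
theorem sequence_cocycle_coboundary (n : ℕ) (i j : Fin n) (hij : i ≠ j)
    (p q : Tpoly n)
    (hp : (p.vars : Set (Fin n ⊕ Fin n)) ⊆ {Sum.inl i, Sum.inr i})
    (hq : (q.vars : Set (Fin n ⊕ Fin n)) ⊆ {Sum.inl j, Sum.inr j}) :
    schouten p q = 0 ∧
    ∀ γ ν : Tpoly n,
      schouten p γ * schouten q ν - schouten p ν * schouten q γ =
        p * schouten q (schouten γ ν)
          + schouten ν (p * schouten q γ)
          - schouten γ (p * schouten q ν) := by
  refine ⟨schouten_eq_zero_of_disjoint ?_, fun γ ν => (ceCoboundary_mul_schouten p q γ ν).symm⟩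
  exact Set.disjoint_singleton.mpr hij |>.mono
    (coordSupport_subset_singleton hp) (coordSupport_subset_singleton hq)
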